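/- Let g_k(x) = α_k + β_k·x for k = 1,2 with β₂ > β₁, and suppose the intersection point θ = (α₁−α₂)/(β₂−β₁) lies in (0,1). Let V : [0,1] → ℝ be continuous with V(x) > 0 for all x, and let f : [0,1] → ℝ be nonnegative, bounded, measurable, and continuous at θ. Define R_I(n) = ∫₀¹ Φ(−√n·|g₁(x)−g₂(x)|/√V(x)) · |g₂(x)−g₁(x)| · f(x) dx. Then lim_{n→∞} n·R_I(n) = V(θ)·f(θ)/(2(β₂−β₁)). -/

import Mathlib

/-!
After the substitution `x = θ + u / √n`, with `b = β₂ - β₁`, the quantity `n R_I(n)` becomes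
`∫ Φ(-|b u| / √V(θ + u/√n)) |b u| f(θ + u/√n) du` over `(-θ√n, (1-θ)√n]`. Mills' bound
`Φ(-t) ≤ φ(t) / t` dominates this integrand by a Gaussian, uniformly in `n`, so by dominated
convergence the limit is `f(θ) ∫ Φ(-|b u| / σ) |b u| du` with `σ² = V(θ)`. Scaling reduces this
integral to `∫₀^∞ v Φ(-v) dv = 1/4`, read off the antiderivative `((v² - 1) Φ(-v) - v φ(v)) / 2`.
-/

open MeasureTheory Filter

/-- Standard normal cumulative distribution function `Φ`. -/
noncomputable def stdNormalCDF (x : ℝ) : ℝ :=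
  ∫ t in Set.Iic x, Real.exp (-t ^ 2 / 2) / Real.sqrt (2 * Real.pi)

open Set Real Topology

noncomputable def stdNormalPDF (t : ℝ) : ℝ := exp (-t ^ 2 / 2) / √(2 * π)

lemma stdNormalPDF_eq_gaussianPDFReal : stdNormalPDF = ProbabilityTheory.gaussianPDFReal 0 1 := by
  ext t
  simp [stdNormalPDF, ProbabilityTheory.gaussianPDFReal, div_eq_inv_mul]

lemma stdNormalPDF_pos (t : ℝ) : 0 < stdNormalPDF t := by
  unfold stdNormalPDF; positivity

lemma integrable_stdNormalPDF : Integrable stdNormalPDF :=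
  stdNormalPDF_eq_gaussianPDFReal ▸ ProbabilityTheory.integrable_gaussianPDFReal 0 1

lemma integral_stdNormalPDF : ∫ t, stdNormalPDF t = 1 :=
  stdNormalPDF_eq_gaussianPDFReal ▸ ProbabilityTheory.integral_gaussianPDFReal_eq_one 0 one_ne_zero

lemma stdNormalPDF_neg (t : ℝ) : stdNormalPDF (-t) = stdNormalPDF t := by
  simp [stdNormalPDF]

lemma stdNormalPDF_abs (t : ℝ) : stdNormalPDF |t| = stdNormalPDF t := by
  simp [stdNormalPDF]

lemma hasDerivAt_stdNormalPDF (t : ℝ) : HasDerivAt stdNormalPDF (-t * stdNormalPDF t) t := by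
  have h : HasDerivAt (fun t : ℝ => -t ^ 2 / 2) (-t) t :=
    (((hasDerivAt_id t).fun_pow 2).fun_neg.div_const 2).congr_deriv (by simp; ring)
  exact (h.exp.div_const √(2 * π)).congr_deriv (by rw [stdNormalPDF]; ring)

lemma tendsto_abs_pow_mul_stdNormalPDF_cocompact (k : ℕ) :
    Tendsto (fun t => |t| ^ k * stdNormalPDF t) (cocompact ℝ) (𝓝 0) := by
  have := (tendsto_rpow_abs_mul_exp_neg_mul_sq_cocompact one_half_pos k).div_const √(2 * π)
  rw [zero_div] at this
  refine this.congr fun t => ?_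
  rw [rpow_natCast, stdNormalPDF]; ring_nf

lemma integrable_neg_mul_stdNormalPDF : Integrable (fun t => -t * stdNormalPDF t) := by
  refine ((integrable_mul_exp_neg_mul_sq one_half_pos).neg.div_const √(2 * π)).congr ?_
  filter_upwards with t
  simp only [Pi.neg_apply, stdNormalPDF]; ring_nf

lemma stdNormalCDF_eq_integral (x : ℝ) : stdNormalCDF x = ∫ t in Iic x, stdNormalPDF t := rfl

lemma stdNormalCDF_nonneg (x : ℝ) : 0 ≤ stdNormalCDF x :=
  setIntegral_nonneg measurableSet_Iic fun t _ => (stdNormalPDF_pos t).le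

lemma monotone_stdNormalCDF : Monotone stdNormalCDF := fun _ _ hxy =>
  setIntegral_mono_set integrable_stdNormalPDF.integrableOn
    (Eventually.of_forall fun t => (stdNormalPDF_pos t).le) (Iic_subset_Iic.mpr hxy).eventuallyLE

lemma stdNormalCDF_zero : stdNormalCDF 0 = 1 / 2 := by
  have hsplit := integral_add_compl measurableSet_Iic integrable_stdNormalPDF (s := Iic 0)
  rw [compl_Iic, integral_stdNormalPDF] at hsplit
  have hsymm : ∫ t in Ioi (0 : ℝ), stdNormalPDF t = ∫ t in Iic 0, stdNormalPDF t := by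
    simpa only [stdNormalPDF_neg, neg_zero] using integral_comp_neg_Ioi 0 stdNormalPDF
  rw [stdNormalCDF_eq_integral]
  linarith

lemma hasDerivAt_stdNormalCDF (x : ℝ) : HasDerivAt stdNormalCDF (stdNormalPDF x) x := by
  have hcont : Continuous stdNormalPDF := by unfold stdNormalPDF; fun_prop
  have h := ((hcont.integral_hasStrictDerivAt 0 x).hasDerivAt).const_add (stdNormalCDF 0)
  refine h.congr_of_eventuallyEq (Eventually.of_forall fun y => ?_)
  simp only [stdNormalCDF_eq_integral]
  rw [← intervalIntegral.integral_Iic_sub_Iic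
    integrable_stdNormalPDF.integrableOn integrable_stdNormalPDF.integrableOn]
  ring

lemma continuous_stdNormalCDF : Continuous stdNormalCDF :=
  continuous_iff_continuousAt.mpr fun x => (hasDerivAt_stdNormalCDF x).continuousAt

/-- Mills' ratio bound: on `(-∞, -t]` the density is at most `-s φ(s) / t`, an exact derivative. -/
lemma stdNormalCDF_neg_le_div {t : ℝ} (ht : 0 < t) : stdNormalCDF (-t) ≤ stdNormalPDF t / t := by
  have hint : ∫ s in Iic (-t), -s * stdNormalPDF s = stdNormalPDF t := by
    rw [integral_Iic_of_hasDerivAt_of_tendsto' (fun s _ => hasDerivAt_stdNormalPDF s)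
      integrable_neg_mul_stdNormalPDF.integrableOn
      ((tendsto_abs_pow_mul_stdNormalPDF_cocompact 0).mono_left atBot_le_cocompact |>.congr
        fun s => by simp), sub_zero, stdNormalPDF_neg]
  have hle : ∀ s ∈ Iic (-t), stdNormalPDF s ≤ t⁻¹ * (-s * stdNormalPDF s) := fun s hs => by
    rw [← mul_assoc]
    refine le_mul_of_one_le_left (stdNormalPDF_pos s).le ?_
    rw [inv_mul_eq_div, one_le_div ht]
    linarith [mem_Iic.mp hs]
  calc stdNormalCDF (-t) ≤ ∫ s in Iic (-t), t⁻¹ * (-s * stdNormalPDF s) :=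
        setIntegral_mono_on integrable_stdNormalPDF.integrableOn
          (integrable_neg_mul_stdNormalPDF.integrableOn.const_mul _)
          measurableSet_Iic hle
    _ = stdNormalPDF t / t := by rw [integral_const_mul, hint, inv_mul_eq_div]

lemma stdNormalCDF_neg_abs_mul_abs_le (v : ℝ) : stdNormalCDF (-|v|) * |v| ≤ stdNormalPDF v := by
  rcases (abs_nonneg v).eq_or_lt with hv | hv
  · rw [← hv, mul_zero]
    exact (stdNormalPDF_pos v).le
  · calc stdNormalCDF (-|v|) * |v| ≤ stdNormalPDF |v| / |v| * |v| := by
          gcongr; exact stdNormalCDF_neg_le_div hv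
      _ = stdNormalPDF v := by rw [div_mul_cancel₀ _ hv.ne', stdNormalPDF_abs]

lemma tendsto_stdNormalCDF_neg_mul_sq_atTop :
    Tendsto (fun v => stdNormalCDF (-v) * v ^ 2) atTop (𝓝 0) := by
  have h := (tendsto_abs_pow_mul_stdNormalPDF_cocompact 1).mono_left atTop_le_cocompact
  refine squeeze_zero'
    (Eventually.of_forall fun v => mul_nonneg (stdNormalCDF_nonneg _) (sq_nonneg v)) ?_ h
  filter_upwards [eventually_ge_atTop 0] with v hv
  have := stdNormalCDF_neg_abs_mul_abs_le v
  rw [abs_of_nonneg hv] at this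
  rw [pow_one, abs_of_nonneg hv, sq, ← mul_assoc, mul_comm v]
  exact mul_le_mul_of_nonneg_right this hv

lemma hasDerivAt_stdNormalCDF_antideriv (v : ℝ) :
    HasDerivAt (fun v => ((v ^ 2 - 1) * stdNormalCDF (-v) - v * stdNormalPDF v) / 2)
      (stdNormalCDF (-v) * v) v := by
  have hΦ : HasDerivAt (fun v => stdNormalCDF (-v)) (-stdNormalPDF v) v :=
    ((hasDerivAt_stdNormalCDF (-v)).comp v (hasDerivAt_neg v)).congr_deriv
      (by rw [stdNormalPDF_neg, mul_neg_one])
  have hsq : HasDerivAt (fun v : ℝ => v ^ 2 - 1) (2 * v) v :=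
    (((hasDerivAt_id v).fun_pow 2).sub_const 1).congr_deriv (by simp)
  refine ((((hsq.mul hΦ).sub ((hasDerivAt_id v).mul (hasDerivAt_stdNormalPDF v))).div_const
    2)).congr_deriv ?_
  simp only [id]
  ring

lemma integral_Ioi_stdNormalCDF_neg_mul : ∫ v in Ioi 0, stdNormalCDF (-v) * v = 1 / 4 := by
  have hint : IntegrableOn (fun v => stdNormalCDF (-v) * v) (Ioi 0) := by
    refine integrable_stdNormalPDF.integrableOn.mono' ?_ ?_
    · exact ((continuous_stdNormalCDF.comp continuous_neg).mul continuous_id).aestronglyMeasurable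
    · filter_upwards [ae_restrict_mem measurableSet_Ioi] with v (hv : 0 < v)
      have := stdNormalCDF_neg_abs_mul_abs_le v
      rw [abs_of_pos hv] at this
      rwa [Real.norm_of_nonneg (mul_nonneg (stdNormalCDF_nonneg _) hv.le)]
  have hlim : Tendsto (fun v => ((v ^ 2 - 1) * stdNormalCDF (-v) - v * stdNormalPDF v) / 2)
      atTop (𝓝 0) := by
    have hpdf := (tendsto_abs_pow_mul_stdNormalPDF_cocompact 1).mono_left atTop_le_cocompact
    have hcdf : Tendsto (fun v => stdNormalCDF (-v)) atTop (𝓝 0) := by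
      refine squeeze_zero' (Eventually.of_forall fun v => stdNormalCDF_nonneg _) ?_
        tendsto_stdNormalCDF_neg_mul_sq_atTop
      filter_upwards [eventually_ge_atTop 1] with v hv
      exact le_mul_of_one_le_right (stdNormalCDF_nonneg _) (one_le_pow₀ hv)
    have := ((tendsto_stdNormalCDF_neg_mul_sq_atTop.sub hcdf).sub hpdf).div_const 2
    rw [sub_zero, sub_zero, zero_div] at this
    refine this.congr' ?_
    filter_upwards [eventually_ge_atTop 0] with v hv
    rw [pow_one, abs_of_nonneg hv]
    ring
  rw [integral_Ioi_of_hasDerivAt_of_tendsto' (fun v _ => hasDerivAt_stdNormalCDF_antideriv v)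
    hint hlim]
  norm_num [stdNormalCDF_zero]

lemma integral_stdNormalCDF_neg_abs_div_mul_abs {b σ : ℝ} (hb : 0 < b) (hσ : 0 < σ) :
    ∫ u, stdNormalCDF (-|b * u| / σ) * |b * u| = σ ^ 2 / (2 * b) := by
  have hscale : ∀ u, stdNormalCDF (-|b * u| / σ) * |b * u| =
      σ * (stdNormalCDF (-|b / σ * u|) * |b / σ * u|) := fun u => by
    rw [abs_mul, abs_mul, abs_div, abs_of_pos hb, abs_of_pos hσ]
    field_simp
  simp_rw [hscale]
  rw [integral_const_mul, Measure.integral_comp_mul_left (fun v => stdNormalCDF (-|v|) * |v|),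
    integral_comp_abs (f := fun v => stdNormalCDF (-v) * v), integral_Ioi_stdNormalCDF_neg_mul,
    inv_div, abs_of_pos (div_pos hσ hb), smul_eq_mul]
  field_simp
  ring

lemma stdNormalCDF_neg_abs_div_mul_abs_le {σ τ : ℝ} (hσ : 0 < σ) (hστ : σ ≤ τ) (w : ℝ) :
    stdNormalCDF (-|w| / σ) * |w| ≤ τ * stdNormalPDF (w / τ) := by
  have hτ : 0 < τ := hσ.trans_le hστ
  calc stdNormalCDF (-|w| / σ) * |w| ≤ stdNormalCDF (-|w| / τ) * |w| := by
        refine mul_le_mul_of_nonneg_right (monotone_stdNormalCDF ?_) (abs_nonneg w)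
        rw [neg_div, neg_div, neg_le_neg_iff]
        exact div_le_div_of_nonneg_left (abs_nonneg w) hσ hστ
    _ = τ * (stdNormalCDF (-|w / τ|) * |w / τ|) := by
        rw [abs_div, abs_of_pos hτ]
        field_simp
    _ ≤ τ * stdNormalPDF (w / τ) := by
        gcongr
        exact stdNormalCDF_neg_abs_mul_abs_le _

lemma add_div_mem_Ioc_iff {a b θ s u : ℝ} (hs : 0 < s) :
    θ + u / s ∈ Ioc a b ↔ u ∈ Ioc (s * (a - θ)) (s * (b - θ)) := by
  simp only [mem_Ioc, ← sub_lt_iff_lt_add', ← le_sub_iff_add_le', lt_div_iff₀' hs, div_le_iff₀' hs]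

lemma mul_intervalIntegral_comp_mul_sub (K : ℝ → ℝ → ℝ) {a b θ s : ℝ} (hab : a ≤ b)
    (hs : 0 < s) :
    s * ∫ x in a..b, K x (s * (x - θ)) =
      ∫ u, (Ioc (s * (a - θ)) (s * (b - θ))).indicator (fun u => K (θ + u / s) u) u := by
  have hK : ∀ x, K x (s * (x - θ)) = K (θ + (s * x - s * θ) / s) (s * x - s * θ) := fun x => by
    congr 1 <;> field_simp; ring
  simp_rw [hK]
  rw [intervalIntegral.integral_comp_mul_sub (fun u => K (θ + u / s) u) hs.ne', smul_eq_mul,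
    mul_inv_cancel_left₀ hs.ne', intervalIntegral.integral_of_le (by nlinarith),
    integral_indicator measurableSet_Ioc, mul_sub, mul_sub]

theorem tendsto_mul_intervalIntegral_comp_mul_sub {K : ℝ → ℝ → ℝ} {B : ℝ → ℝ} {a b θ : ℝ}
    (hθ : θ ∈ Ioo a b) (hK : Measurable (Function.uncurry K)) (hB : Integrable B)
    (hKB : ∀ x ∈ Icc a b, ∀ u, ‖K x u‖ ≤ B u)
    (hKθ : ∀ u, ContinuousWithinAt (K · u) (Icc a b) θ) :
    Tendsto (fun s => s * ∫ x in a..b, K x (s * (x - θ))) atTop (𝓝 (∫ u, K θ u)) := by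
  let F : ℝ → ℝ → ℝ := fun s => (Ioc (s * (a - θ)) (s * (b - θ))).indicator
    (fun u => K (θ + u / s) u)
  have hF_meas : ∀ s, AEStronglyMeasurable (F s) := fun s =>
    ((hK.comp ((measurable_const.add (measurable_id.div_const s)).prodMk measurable_id)).indicator
      measurableSet_Ioc).aestronglyMeasurable
  have hF_bound : ∀ᶠ s in atTop, ∀ u, ‖F s u‖ ≤ B u := by
    filter_upwards [eventually_gt_atTop 0] with s hs u
    by_cases hu : u ∈ Ioc (s * (a - θ)) (s * (b - θ))
    · rw [show F s u = K (θ + u / s) u from indicator_of_mem hu _]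
      exact hKB _ (Ioc_subset_Icc_self ((add_div_mem_Ioc_iff hs).mpr hu)) u
    · rw [show F s u = 0 from indicator_of_notMem hu _, norm_zero]
      exact (norm_nonneg _).trans (hKB θ (Ioo_subset_Icc_self hθ) u)
  have hF_lim : ∀ u, Tendsto (F · u) atTop (𝓝 (K θ u)) := fun u => by
    have hθ_lim : Tendsto (fun s => θ + u / s) atTop (𝓝 θ) := by
      simpa using tendsto_const_nhds.add (tendsto_const_nhds (x := u).div_atTop tendsto_id)
    have hmem : ∀ᶠ s in atTop, θ + u / s ∈ Ioo a b := hθ_lim (isOpen_Ioo.mem_nhds hθ)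
    refine ((hKθ u).tendsto.comp (tendsto_nhdsWithin_iff.mpr
      ⟨hθ_lim, hmem.mono fun _ h => Ioo_subset_Icc_self h⟩)).congr' ?_
    filter_upwards [hmem, eventually_gt_atTop 0] with s hs hs0
    exact (indicator_of_mem ((add_div_mem_Ioc_iff hs0).mp (Ioo_subset_Ioc_self hs)) _).symm
  refine (tendsto_integral_filter_of_dominated_convergence B (Eventually.of_forall hF_meas)
    (hF_bound.mono fun _ h => Eventually.of_forall h) hB (Eventually.of_forall hF_lim)).congr' ?_
  filter_upwards [eventually_gt_atTop 0] with s hs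
  exact (mul_intervalIntegral_comp_mul_sub K (hθ.1.le.trans hθ.2.le) hs).symm

lemma exists_continuous_pos_eqOn_Icc {V : ℝ → ℝ} {a b : ℝ} (hab : a ≤ b)
    (hV : ContinuousOn V (Icc a b)) (hV_pos : ∀ x ∈ Icc a b, 0 < V x) :
    ∃ W : ℝ → ℝ, Continuous W ∧ (∀ x, 0 < W x) ∧ BddAbove (range W) ∧ EqOn W V (Icc a b) := by
  refine ⟨fun x => V (projIcc a b hab x),
    hV.comp_continuous continuous_projIcc.subtype_val fun x => (projIcc a b hab x).2,
    fun x => hV_pos _ (projIcc a b hab x).2, ?_, fun x hx => by simp only [projIcc_of_mem _ hx]⟩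
  exact (isCompact_Icc.bddAbove_image hV).mono
    (range_subset_iff.mpr fun x => mem_image_of_mem V (projIcc a b hab x).2)

theorem tendsto_sq_mul_intervalIntegral_stdNormalCDF {W f : ℝ → ℝ} {a b θ β : ℝ} (hβ : 0 < β)
    (hθ : θ ∈ Ioo a b) (hW : Continuous W) (hW_pos : ∀ x, 0 < W x) (hW_bdd : BddAbove (range W))
    (hf_nonneg : ∀ x ∈ Icc a b, 0 ≤ f x) (hf_bdd : ∃ C, ∀ x ∈ Icc a b, f x ≤ C)
    (hf_meas : Measurable f) (hf_cont : ContinuousWithinAt f (Icc a b) θ) :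
    Tendsto (fun s => s ^ 2 * ∫ x in a..b,
        stdNormalCDF (-(s * |β * (x - θ)|) / √(W x)) * |β * (x - θ)| * f x)
      atTop (𝓝 (W θ * f θ / (2 * β))) := by
  obtain ⟨M, hM⟩ := hW_bdd
  have hWM : ∀ x, W x ≤ M := fun x => hM (mem_range_self x)
  have hM_pos : 0 < √M := sqrt_pos.mpr ((hW_pos θ).trans_le (hWM θ))
  obtain ⟨C, hC⟩ := hf_bdd
  set K : ℝ → ℝ → ℝ := fun x u => stdNormalCDF (-|β * u| / √(W x)) * |β * u| * f x
  have hK_meas : Measurable (Function.uncurry K) := by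
    have := continuous_stdNormalCDF.measurable
    have := hW.measurable
    fun_prop
  have hB : Integrable fun u => √M * stdNormalPDF (β * u / √M) * C :=
    (((integrable_stdNormalPDF.comp_div hM_pos.ne').comp_mul_left' hβ.ne').const_mul _).mul_const _
  have hK_bound : ∀ x ∈ Icc a b, ∀ u, ‖K x u‖ ≤ √M * stdNormalPDF (β * u / √M) * C :=
    fun x hx u => by
      rw [Real.norm_of_nonneg (mul_nonneg (mul_nonneg (stdNormalCDF_nonneg _) (abs_nonneg _))
        (hf_nonneg x hx))]
      exact mul_le_mul (stdNormalCDF_neg_abs_div_mul_abs_le (sqrt_pos.mpr (hW_pos x))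
        (sqrt_le_sqrt (hWM x)) (β * u)) (hC x hx) (hf_nonneg x hx)
        (mul_nonneg hM_pos.le (stdNormalPDF_pos _).le)
  have hK_cont : ∀ u, ContinuousWithinAt (K · u) (Icc a b) θ := fun u =>
    ((continuous_stdNormalCDF.comp (continuous_const.div hW.sqrt
      fun x => (sqrt_pos.mpr (hW_pos x)).ne')).mul continuous_const).continuousWithinAt.mul hf_cont
  have hK_integral : ∫ u, K θ u = W θ * f θ / (2 * β) := by
    rw [integral_mul_const, integral_stdNormalCDF_neg_abs_div_mul_abs hβ (sqrt_pos.mpr (hW_pos θ)),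
      sq_sqrt (hW_pos θ).le]
    ring
  rw [← hK_integral]
  refine (tendsto_mul_intervalIntegral_comp_mul_sub hθ hK_meas hB hK_bound hK_cont).congr' ?_
  filter_upwards [eventually_ge_atTop 0] with s hs
  rw [sq, mul_assoc]
  congr 1
  rw [← intervalIntegral.integral_const_mul]
  refine intervalIntegral.integral_congr fun x _ => ?_
  simp only [K, mul_left_comm β s, abs_mul s, abs_of_nonneg hs]
  ring

/-- For two linear response functions `g_k(x) = α_k + β_k x` with `β₂ > β₁`
crossing at `θ = (α₁−α₂)/(β₂−β₁) ∈ (0,1)`, the ideal regret satisfies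
`lim_{n→∞} n R_I(n) = V(θ) f(θ) / (2(β₂−β₁))`. -/
theorem ideal_regret_limit_one_dim
    (α1 α2 β1 β2 θ : ℝ) (hβ : β1 < β2)
    (hθ_def : θ = (α1 - α2) / (β2 - β1)) (hθ : θ ∈ Set.Ioo (0 : ℝ) 1)
    (V f : ℝ → ℝ)
    (hV_cont : ContinuousOn V (Set.Icc 0 1))
    (hV_pos : ∀ x ∈ Set.Icc (0 : ℝ) 1, 0 < V x)
    (hf_nonneg : ∀ x ∈ Set.Icc (0 : ℝ) 1, 0 ≤ f x)
    (hf_bdd : ∃ C, ∀ x ∈ Set.Icc (0 : ℝ) 1, f x ≤ C)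
    (hf_meas : Measurable f)
    (hf_cont : ContinuousWithinAt f (Set.Icc 0 1) θ) :
    Tendsto (fun n : ℕ => (n : ℝ) * ∫ x in (0 : ℝ)..1,
        stdNormalCDF (-(Real.sqrt (n : ℝ) * |(α1 + β1 * x) - (α2 + β2 * x)|) /
            Real.sqrt (V x)) *
          |(α2 + β2 * x) - (α1 + β1 * x)| * f x)
      atTop (nhds (V θ * f θ / (2 * (β2 - β1)))) := by
  -- `V` is only evaluated on `[0, 1]`; a continuous extension makes the kernel measurable.
  obtain ⟨W, hW, hW_pos, hW_bdd, hWV⟩ := exists_continuous_pos_eqOn_Icc zero_le_one hV_cont hV_pos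
  have hlim := (tendsto_sq_mul_intervalIntegral_stdNormalCDF (sub_pos.mpr hβ) hθ hW hW_pos hW_bdd
    hf_nonneg hf_bdd hf_meas hf_cont).comp (tendsto_sqrt_atTop.comp tendsto_natCast_atTop_atTop)
  rw [hWV (Ioo_subset_Icc_self hθ)] at hlim
  refine hlim.congr fun n => ?_
  have hgap : ∀ x, (α2 + β2 * x) - (α1 + β1 * x) = (β2 - β1) * (x - θ) := fun x => by
    rw [hθ_def]
    field_simp [(sub_pos.mpr hβ).ne']
    ring
  simp only [Function.comp_apply, sq_sqrt (Nat.cast_nonneg (n : ℕ))]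
  congr 1
  refine intervalIntegral.integral_congr fun x hx => ?_
  rw [uIcc_of_le zero_le_one] at hx
  simp only [abs_sub_comm (α1 + β1 * x), hgap, hWV hx]
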